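/- Let α ∈ ℂ with 0 < Re α < 1, ω ∈ [0, π/2) and λ ∈ S_ω. Then the maps z ↦ v_z(λ) and z ↦ w_z(λ) are holomorphic on S_{π/2−ω}, and as z → 0 with z ∈ S_{π/2−ω} one has: v_z(λ) → 1, −z^{1−2α}(d/dz)v_z(λ) → 0, w_z(λ) → 0, and z^{1−2α}(d/dz)w_z(λ) → 1. -/

import Mathlib

open Complex Filter Set MeasureTheory

/-- The open sector `S_θ = {ζ ∈ ℂ \ (-∞,0] : |arg ζ| < θ}` for `θ ∈ (0,π)`,
with the convention `S_0 = (0,∞)`. -/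
noncomputable def sector (θ : ℝ) : Set ℂ :=
  if θ = 0 then {ζ : ℂ | 0 < ζ.re ∧ ζ.im = 0}
  else {ζ : ℂ | ζ ≠ 0 ∧ |ζ.arg| < θ}

/-- Modified Bessel function of the first kind, `I_β`. -/
noncomputable def besselI (β ζ : ℂ) : ℂ :=
  (ζ / 2) ^ β * ∑' k : ℕ, ζ ^ (2 * k) / ((4 : ℂ) ^ k * (k.factorial : ℂ) * Complex.Gamma (β + (k : ℂ) + 1))

/-- Modified Bessel function of the second kind, `K_β` (for `Re β ∉ ℤ`). -/
noncomputable def besselK (β ζ : ℂ) : ℂ :=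
  ((Real.pi : ℂ) / (2 * Complex.sin (β * (Real.pi : ℂ)))) * (besselI (-β) ζ - besselI β ζ)

/-- The function `u_z(λ) = (λz)^α K_α(λz) / (2^(α-1) Γ(α))`. -/
noncomputable def uFun (α z l : ℂ) : ℂ :=
  (l * z) ^ α * besselK α (l * z) / ((2 : ℂ) ^ (α - 1) * Complex.Gamma α)

/-- The function `v_z(λ) = (Γ(1-α)/2^α) (λz)^α I_{-α}(λz)`. -/
noncomputable def vFun (α z l : ℂ) : ℂ :=
  (Complex.Gamma (1 - α) / (2 : ℂ) ^ α) * ((l * z) ^ α * besselI (-α) (l * z))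

/-- The function `w_z(λ) = (Γ(α)/2^(1-α)) (λ⁻¹ z)^α I_α(λz)`. -/
noncomputable def wFun (α z l : ℂ) : ℂ :=
  (Complex.Gamma α / (2 : ℂ) ^ (1 - α)) * ((l⁻¹ * z) ^ α * besselI α (l * z))

/-!
For every `β`, `I_β(ζ) = (ζ/2)^β E_β(ζ²)` with `E_β(t) = ∑ tᵏ / (4ᵏ k! Γ(β+k+1))` entire and
`E_β(0) = 1/Γ(β+1)`. When `|arg λ| + |arg z| < π` the complex powers split without branch
corrections, so `v_z(λ) = Γ(1-α) E_{-α}((λz)²)` and `w_z(λ) = z^{2α} · Γ(α)/2 · E_α((λz)²)`.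
Holomorphy in `z` is then clear, `v → 1` and `w → 0` (as `Re α > 0`). For the derivatives,
`z^{1-2α} ∂_z v = O(z^{2-2α}) → 0` since `Re α < 1`, while `z^{1-2α} ∂_z (z^{2α} g) = 2α g + z g'`
tends to `2α g(0) = αΓ(α)/Γ(α+1) = 1`.
-/

open scoped Topology Real

namespace Complex

lemma mul_cpow_of_arg_add_mem {x y : ℂ} (hx : x ≠ 0) (hy : y ≠ 0)
    (h : x.arg + y.arg ∈ Ioc (-π) π) (a : ℂ) : (x * y) ^ a = x ^ a * y ^ a := by
  rw [cpow_def_of_ne_zero (mul_ne_zero hx hy), log_mul hx hy h, add_mul, exp_add,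
    ← cpow_def_of_ne_zero hx, ← cpow_def_of_ne_zero hy]

lemma div_two_cpow (ζ a : ℂ) : (ζ / 2) ^ a = ζ ^ a / 2 ^ a := by
  rcases eq_or_ne ζ 0 with rfl | hζ
  · rcases eq_or_ne a 0 with rfl | ha <;> simp [zero_cpow, *]
  rw [div_eq_mul_inv, mul_cpow_of_arg_add_mem hζ (by norm_num)
    (by simpa [arg_inv, Real.pi_ne_zero.symm] using arg_mem_Ioc ζ),
    inv_cpow _ _ (by simp [Real.pi_ne_zero.symm]), div_eq_mul_inv]

lemma inv_mul_cpow_mul_mul_cpow {l z : ℂ} (hl : l ≠ 0) (hz : z ≠ 0)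
    (h : |l.arg| + |z.arg| < π) (a : ℂ) : (l⁻¹ * z) ^ a * (l * z) ^ a = z ^ (2 * a) := by
  have hl' : l.arg ≠ π := fun h' => by
    simp [h', abs_of_pos Real.pi_pos] at h
    linarith [abs_nonneg z.arg]
  have hinv : arg l⁻¹ = -arg l := by rw [arg_inv, if_neg hl']
  have h1 := abs_lt.mp (lt_of_le_of_lt (abs_add_le (-l.arg) z.arg) (by rwa [abs_neg]))
  have h2 := abs_lt.mp (lt_of_le_of_lt (abs_add_le l.arg z.arg) h)
  rw [mul_cpow_of_arg_add_mem (inv_ne_zero hl) hz (by rw [hinv]; exact ⟨h1.1, h1.2.le⟩),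
    mul_cpow_of_arg_add_mem hl hz ⟨h2.1, h2.2.le⟩, inv_cpow _ _ hl', two_mul, cpow_add _ _ hz]
  have : l ^ a ≠ 0 := cpow_ne_zero_iff.mpr (Or.inl hl)
  field_simp

lemma mem_slitPlane_of_abs_arg_lt {z : ℂ} (hz : z ≠ 0) (h : |z.arg| < π) : z ∈ slitPlane := by
  refine mem_slitPlane_iff_arg.mpr ⟨fun h' => ?_, hz⟩
  rw [h', abs_of_pos Real.pi_pos] at h
  exact lt_irrefl _ h

lemma tendsto_cpow_const_nhds_zero {a : ℂ} (ha : 0 < a.re) :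
    Tendsto (fun z : ℂ => z ^ a) (𝓝 0) (𝓝 0) := by
  have ha0 : a ≠ 0 := fun h => by simp [h] at ha
  simpa [zero_cpow ha0] using
    (continuousAt_cpow_const_of_re_pos (Or.inl zero_re.ge) ha).tendsto

end Complex

namespace BesselI

variable {β : ℂ}

-- `Gamma` vanishes at its poles, so this is the true coefficient `1/Γ(β+n+1)` for every `β`.
noncomputable def coeff (β : ℂ) (n : ℕ) : ℂ :=
  ((4 : ℂ) ^ n * (n.factorial : ℂ) * Gamma (β + n + 1))⁻¹

lemma coeff_succ {n : ℕ} (h : β + n + 1 ≠ 0) :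
    coeff β (n + 1) = coeff β n * ((4 * (n + 1 : ℂ))⁻¹ * (β + 1 + n)⁻¹) := by
  have harg : β + ((n + 1 : ℕ) : ℂ) + 1 = β + n + 1 + 1 := by push_cast; ring
  rw [coeff, coeff, harg, Gamma_add_one _ h, pow_succ, Nat.factorial_succ]
  push_cast
  rw [show β + 1 + n = β + n + 1 by ring]
  simp only [mul_inv]
  ring

lemma eventually_re_add_natCast_add_one_pos (β : ℂ) : ∀ᶠ n : ℕ in atTop, 0 < (β + n + 1).re := by
  filter_upwards [tendsto_natCast_atTop_atTop.eventually_gt_atTop (-β.re - 1)] with n hn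
  simp only [add_re, natCast_re, one_re]
  linarith

lemma radius_ofScalars_coeff_eq_top : (FormalMultilinearSeries.ofScalars ℂ (coeff β)).radius = ⊤ := by
  have hcoeff : ∀ᶠ n in atTop, coeff β n ≠ 0 := by
    filter_upwards [eventually_re_add_natCast_add_one_pos β] with n hn
    exact inv_ne_zero (mul_ne_zero (by simp [n.factorial_ne_zero]) (Gamma_ne_zero_of_re_pos hn))
  refine FormalMultilinearSeries.ofScalars_radius_eq_top_of_tendsto ℂ _ hcoeff ?_
  have hcob : ∀ c : ℂ, Tendsto (fun n : ℕ => (c + n)⁻¹) atTop (𝓝 0) := fun c =>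
    tendsto_inv₀_cobounded.comp
      ((tendsto_const_add_cobounded c).comp tendsto_natCast_atTop_cobounded)
  have hratio : Tendsto (fun n : ℕ => (4 * (n + 1 : ℂ))⁻¹ * (β + 1 + n)⁻¹) atTop (𝓝 0) := by
    have h4 : Tendsto (fun n : ℕ => (4 * (n + 1 : ℂ))⁻¹) atTop (𝓝 0) := by
      simpa [mul_inv, add_comm, mul_comm] using (hcob 1).const_mul 4⁻¹
    simpa using h4.mul (hcob (β + 1))
  refine (norm_zero (E := ℂ) ▸ hratio.norm).congr' ?_
  filter_upwards [eventually_re_add_natCast_add_one_pos β, hcoeff] with n hn hn'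
  rw [Nat.succ_eq_add_one, coeff_succ (fun h => by simp [h] at hn), norm_mul (coeff β n),
    mul_div_cancel_left₀ _ (norm_ne_zero_iff.mpr hn'), norm_mul]

noncomputable def entirePart (β : ℂ) : ℂ → ℂ := FormalMultilinearSeries.ofScalarsSum (coeff β)

@[fun_prop]
lemma differentiable_entirePart (β : ℂ) : Differentiable ℂ (entirePart β) := by
  have h := (FormalMultilinearSeries.ofScalars ℂ (coeff β)).hasFPowerSeriesOnBall
    (by simp [radius_ofScalars_coeff_eq_top])
  rw [radius_ofScalars_coeff_eq_top] at h
  exact fun t => (h.analyticAt_of_mem (by simp)).differentiableAt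

lemma entirePart_zero (β : ℂ) : entirePart β 0 = (Gamma (β + 1))⁻¹ := by
  simp [entirePart, FormalMultilinearSeries.ofScalarsSum_zero, coeff]

lemma besselI_eq (β ζ : ℂ) : besselI β ζ = (ζ / 2) ^ β * entirePart β (ζ ^ 2) := by
  rw [besselI, entirePart, FormalMultilinearSeries.ofScalars_sum_eq]
  congr 1
  refine tsum_congr fun k => ?_
  rw [smul_eq_mul, ← pow_mul, coeff, div_eq_mul_inv, mul_comm]

end BesselI

open BesselI

lemma cpow_mul_besselI_neg {ζ : ℂ} (hζ : ζ ≠ 0) (a : ℂ) :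
    ζ ^ a * besselI (-a) ζ = 2 ^ a * entirePart (-a) (ζ ^ 2) := by
  have hζa : ζ ^ a ≠ 0 := cpow_ne_zero_iff.mpr (Or.inl hζ)
  rw [besselI_eq, div_two_cpow, cpow_neg, cpow_neg]
  field_simp

lemma vFun_eq {α z l : ℂ} (h : l * z ≠ 0) :
    vFun α z l = Gamma (1 - α) * entirePart (-α) ((l * z) ^ 2) := by
  rw [vFun, cpow_mul_besselI_neg h]
  field_simp

lemma wFun_eq {α z l : ℂ} (hl : l ≠ 0) (hz : z ≠ 0) (h : |l.arg| + |z.arg| < π) :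
    wFun α z l = z ^ (2 * α) * (Gamma α / 2 * entirePart α ((l * z) ^ 2)) := by
  have h2 : (2 : ℂ) ^ (1 - α) * 2 ^ α = 2 := by
    rw [← cpow_add _ _ two_ne_zero, sub_add_cancel, cpow_one]
  rw [wFun, besselI_eq, div_two_cpow, ← inv_mul_cpow_mul_mul_cpow hl hz h]
  field_simp
  linear_combination (-(Gamma α * (z / l) ^ α * entirePart α (l ^ 2 * z ^ 2))) * h2

lemma tendsto_cpow_mul_deriv_comp_sq {f : ℂ → ℂ} (hf : Differentiable ℂ f) (c : ℂ) {a : ℂ}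
    (ha : 0 < (a + 1).re) :
    Tendsto (fun z => z ^ a * deriv (fun w => f ((c * w) ^ 2)) z) (𝓝[≠] 0) (𝓝 0) := by
  have hderiv (z : ℂ) :
      deriv (fun w => f ((c * w) ^ 2)) z = z * (2 * c ^ 2 * deriv f ((c * z) ^ 2)) := by
    have hsq : HasDerivAt (fun w => (c * w) ^ 2) (2 * c ^ 2 * z) z :=
      (((hasDerivAt_id' z).const_mul c).fun_pow 2).congr_deriv (by ring)
    have hcomp : HasDerivAt (fun w => f ((c * w) ^ 2))
        (deriv f ((c * z) ^ 2) * (2 * c ^ 2 * z)) z :=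
      (hf _).hasDerivAt.comp z hsq
    rw [hcomp.deriv]
    ring
  have hlim : Tendsto (fun z => z ^ (a + 1) * (2 * c ^ 2 * deriv f ((c * z) ^ 2))) (𝓝 0) (𝓝 0) := by
    have hf' : Continuous (deriv f) := hf.deriv.continuous
    have hcont : Continuous fun z => 2 * c ^ 2 * deriv f ((c * z) ^ 2) := by fun_prop
    simpa using (tendsto_cpow_const_nhds_zero ha).mul (hcont.tendsto 0)
  refine (hlim.mono_left nhdsWithin_le_nhds).congr' ?_
  filter_upwards [self_mem_nhdsWithin] with z hz
  rw [hderiv, cpow_add _ _ hz, cpow_one, mul_assoc]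

lemma tendsto_cpow_mul_deriv_cpow_mul {g : ℂ → ℂ} (hg : Differentiable ℂ g) (a : ℂ) :
    Tendsto (fun z => z ^ (1 - a) * deriv (fun w => w ^ a * g w) z) (𝓝[slitPlane] 0)
      (𝓝 (a * g 0)) := by
  have hlim : Tendsto (fun z => a * g z + z * deriv g z) (𝓝 0) (𝓝 (a * g 0)) := by
    have hg' : Continuous (deriv g) := hg.deriv.continuous
    have hg'' : Continuous g := hg.continuous
    have hcont : Continuous fun z => a * g z + z * deriv g z := by fun_prop
    simpa using hcont.tendsto 0
  refine (hlim.mono_left nhdsWithin_le_nhds).congr' ?_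
  filter_upwards [self_mem_nhdsWithin] with z hz
  have hz0 : z ≠ 0 := slitPlane_ne_zero hz
  have hprod : HasDerivAt (fun w => w ^ a * g w) (a * z ^ (a - 1) * g z + z ^ a * deriv g z) z :=
    (hasStrictDerivAt_cpow_const hz).hasDerivAt.mul (hg z).hasDerivAt
  have h1 : z ^ (1 - a) * z ^ (a - 1) = 1 := by
    rw [← cpow_add _ _ hz0, sub_add_sub_cancel', sub_self, cpow_zero]
  have h2 : z ^ (1 - a) * z ^ a = z := by
    rw [← cpow_add _ _ hz0, sub_add_cancel, cpow_one]
  rw [hprod.deriv]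
  linear_combination (-(a * g z)) * h1 - deriv g z * h2

lemma mem_sector_iff {θ : ℝ} (hθ : 0 < θ) {z : ℂ} : z ∈ sector θ ↔ z ≠ 0 ∧ |z.arg| < θ := by
  rw [sector, if_neg hθ.ne']
  rfl

lemma ne_zero_and_abs_arg_le_of_mem_sector {θ : ℝ} (hθ : 0 ≤ θ) {z : ℂ} (hz : z ∈ sector θ) :
    z ≠ 0 ∧ |z.arg| ≤ θ := by
  rcases hθ.eq_or_lt with rfl | hθ
  · rw [sector, if_pos rfl] at hz
    exact ⟨fun h => by simp [h] at hz, by simp [arg_eq_zero_iff.mpr ⟨hz.1.le, hz.2⟩]⟩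
  · exact ((mem_sector_iff hθ).1 hz).imp_right le_of_lt

lemma sector_subset_slitPlane {θ : ℝ} (h0 : 0 < θ) (hθ : θ ≤ π) : sector θ ⊆ slitPlane := by
  intro z hz
  obtain ⟨hz0, hzarg⟩ := (mem_sector_iff h0).1 hz
  exact mem_slitPlane_of_abs_arg_lt hz0 (hzarg.trans_le hθ)

lemma isOpen_sector {θ : ℝ} (h0 : 0 < θ) (hθ : θ ≤ π) : IsOpen (sector θ) := by
  refine isOpen_iff_mem_nhds.mpr fun z hz => ?_
  obtain ⟨hz0, hzarg⟩ := (mem_sector_iff h0).1 hz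
  filter_upwards [(continuousAt_arg (sector_subset_slitPlane h0 hθ hz)).abs.eventually_lt
    continuousAt_const hzarg, eventually_ne_nhds hz0] with w hwarg hw0
  exact (mem_sector_iff h0).2 ⟨hw0, hwarg⟩

section

variable {α l : ℂ} {S : Set ℂ}

lemma eqOn_vFun (hl : l ≠ 0) (hS : (0 : ℂ) ∉ S) :
    EqOn (fun z => vFun α z l) (fun z => Gamma (1 - α) * entirePart (-α) ((l * z) ^ 2)) S :=
  fun _ hz => vFun_eq (mul_ne_zero hl (ne_of_mem_of_not_mem hz hS))

lemma differentiableOn_vFun (hl : l ≠ 0) (hS : (0 : ℂ) ∉ S) :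
    DifferentiableOn ℂ (fun z => vFun α z l) S := by
  have h : Differentiable ℂ fun z => Gamma (1 - α) * entirePart (-α) ((l * z) ^ 2) := by fun_prop
  exact h.differentiableOn.congr (eqOn_vFun hl hS)

lemma tendsto_vFun (hα : α.re < 1) (hl : l ≠ 0) (hS : (0 : ℂ) ∉ S) :
    Tendsto (fun z => vFun α z l) (𝓝[S] 0) (𝓝 1) := by
  have hΓ : Gamma (1 - α) ≠ 0 := Gamma_ne_zero_of_re_pos (by simpa using hα)
  have hdiff : Differentiable ℂ fun z => Gamma (1 - α) * entirePart (-α) ((l * z) ^ 2) := by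
    fun_prop
  have hlim := hdiff.continuous.tendsto 0
  rw [mul_zero, zero_pow two_ne_zero, entirePart_zero, neg_add_eq_sub, mul_inv_cancel₀ hΓ] at hlim
  exact (hlim.mono_left nhdsWithin_le_nhds).congr'
    (eventually_nhdsWithin_of_forall fun z hz => (eqOn_vFun hl hS hz).symm)

lemma tendsto_cpow_mul_deriv_vFun (hα : α.re < 1) (hl : l ≠ 0) (hSo : IsOpen S)
    (hS : (0 : ℂ) ∉ S) :
    Tendsto (fun z => z ^ (1 - 2 * α) * deriv (fun w => vFun α w l) z) (𝓝[S] 0) (𝓝 0) := by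
  have hlim := tendsto_cpow_mul_deriv_comp_sq (f := fun t => Gamma (1 - α) * entirePart (-α) t)
    (by fun_prop) l (a := 1 - 2 * α) (by simp; linarith)
  refine (hlim.mono_left (nhdsWithin_mono _ (subset_compl_singleton_iff.mpr hS))).congr'
    (eventually_nhdsWithin_of_forall fun z hz => ?_)
  simp only [(eqOn_vFun hl hS).deriv hSo hz]

lemma subset_slitPlane_of_abs_arg_add_lt (hS : S ⊆ {z | z ≠ 0 ∧ |l.arg| + |z.arg| < π}) :
    S ⊆ slitPlane := by
  intro z hz
  obtain ⟨hz0, hzarg⟩ := hS hz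
  exact mem_slitPlane_of_abs_arg_lt hz0 (by linarith [abs_nonneg l.arg])

lemma eqOn_wFun (hl : l ≠ 0) (hS : S ⊆ {z | z ≠ 0 ∧ |l.arg| + |z.arg| < π}) :
    EqOn (fun z => wFun α z l)
      (fun z => z ^ (2 * α) * (Gamma α / 2 * entirePart α ((l * z) ^ 2))) S :=
  fun _ hz => wFun_eq hl (hS hz).1 (hS hz).2

lemma differentiableOn_wFun (hl : l ≠ 0) (hS : S ⊆ {z | z ≠ 0 ∧ |l.arg| + |z.arg| < π}) :
    DifferentiableOn ℂ (fun z => wFun α z l) S := by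
  have hE := differentiable_entirePart α
  refine DifferentiableOn.congr (fun z hz => ?_) (eqOn_wFun hl hS)
  have hslit := subset_slitPlane_of_abs_arg_add_lt hS hz
  exact ((hasStrictDerivAt_cpow_const hslit).hasDerivAt.differentiableAt.mul
    (by fun_prop)).differentiableWithinAt

lemma tendsto_wFun (hα : 0 < α.re) (hl : l ≠ 0)
    (hS : S ⊆ {z | z ≠ 0 ∧ |l.arg| + |z.arg| < π}) :
    Tendsto (fun z => wFun α z l) (𝓝[S] 0) (𝓝 0) := by
  have hE := differentiable_entirePart α
  have hg : Differentiable ℂ fun z => Gamma α / 2 * entirePart α ((l * z) ^ 2) := by fun_prop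
  have hlim := (tendsto_cpow_const_nhds_zero (a := 2 * α) (by simpa using hα)).mul
    (hg.continuous.tendsto 0)
  rw [zero_mul] at hlim
  exact (hlim.mono_left nhdsWithin_le_nhds).congr'
    (eventually_nhdsWithin_of_forall fun z hz => (eqOn_wFun hl hS hz).symm)

lemma tendsto_cpow_mul_deriv_wFun (hα : 0 < α.re) (hl : l ≠ 0) (hSo : IsOpen S)
    (hS : S ⊆ {z | z ≠ 0 ∧ |l.arg| + |z.arg| < π}) :
    Tendsto (fun z => z ^ (1 - 2 * α) * deriv (fun w => wFun α w l) z) (𝓝[S] 0) (𝓝 1) := by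
  have hα0 : α ≠ 0 := fun h => by simp [h] at hα
  have hΓ : Gamma α ≠ 0 := Gamma_ne_zero_of_re_pos hα
  have hE := differentiable_entirePart α
  have hlim := tendsto_cpow_mul_deriv_cpow_mul
    (g := fun z => Gamma α / 2 * entirePart α ((l * z) ^ 2)) (by fun_prop) (2 * α)
  have hval : 2 * α * (Gamma α / 2 * entirePart α ((l * 0) ^ 2)) = 1 := by
    rw [mul_zero, zero_pow two_ne_zero, entirePart_zero, Gamma_add_one α hα0]
    field_simp
  rw [hval] at hlim
  refine (hlim.mono_left (nhdsWithin_mono _ (subset_slitPlane_of_abs_arg_add_lt hS))).congr'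
    (eventually_nhdsWithin_of_forall fun z hz => ?_)
  simp only [(eqOn_wFun hl hS).deriv hSo hz]

end

theorem stmt8 (α : ℂ) (hα1 : 0 < α.re) (hα2 : α.re < 1)
    (ω : ℝ) (hω : ω ∈ Set.Ico 0 (Real.pi / 2))
    (l : ℂ) (hl : l ∈ sector ω) :
    DifferentiableOn ℂ (fun z => vFun α z l) (sector (Real.pi / 2 - ω)) ∧
    DifferentiableOn ℂ (fun z => wFun α z l) (sector (Real.pi / 2 - ω)) ∧
    Filter.Tendsto (fun z => vFun α z l)
      (nhdsWithin 0 (sector (Real.pi / 2 - ω))) (nhds 1) ∧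
    Filter.Tendsto (fun z : ℂ => -z ^ (1 - 2 * α) * deriv (fun w => vFun α w l) z)
      (nhdsWithin 0 (sector (Real.pi / 2 - ω))) (nhds 0) ∧
    Filter.Tendsto (fun z => wFun α z l)
      (nhdsWithin 0 (sector (Real.pi / 2 - ω))) (nhds 0) ∧
    Filter.Tendsto (fun z : ℂ => z ^ (1 - 2 * α) * deriv (fun w => wFun α w l) z)
      (nhdsWithin 0 (sector (Real.pi / 2 - ω))) (nhds 1) := by
  obtain ⟨hω0, hωπ⟩ := hω
  have hθ : 0 < π / 2 - ω := by linarith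
  obtain ⟨hl0, hlω⟩ := ne_zero_and_abs_arg_le_of_mem_sector hω0 hl
  have hSo : IsOpen (sector (π / 2 - ω)) := isOpen_sector hθ (by linarith)
  have hS : sector (π / 2 - ω) ⊆ {z | z ≠ 0 ∧ |l.arg| + |z.arg| < π} := fun z hz => by
    obtain ⟨hz0, hzω⟩ := (mem_sector_iff hθ).1 hz
    exact ⟨hz0, by linarith⟩
  have h0 : (0 : ℂ) ∉ sector (π / 2 - ω) := fun h => (hS h).1 rfl
  refine ⟨differentiableOn_vFun hl0 h0, differentiableOn_wFun hl0 hS, tendsto_vFun hα2 hl0 h0,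
    ?_, tendsto_wFun hα1 hl0 hS, tendsto_cpow_mul_deriv_wFun hα1 hl0 hSo hS⟩
  simpa [neg_mul] using (tendsto_cpow_mul_deriv_vFun hα2 hl0 hSo h0).neg
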